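/- With Σ, W, S, Q as above (W = (Σ^{1/2})^+, Q the orthogonal projector onto colsp(W S)), the matrix P = I − W^+ Q W satisfies P S = 0, provided colsp(S) ⊆ colsp(Σ). -/

import Mathlib

open Matrix

section

open scoped ComplexOrder

/-- The positive semidefinite square root of a positive semidefinite matrix
(the definition of `Matrix.PosSemidef.sqrt` in the older Mathlib, since removed). -/
noncomputable def Matrix.PosSemidef.sqrt {n 𝕜 : Type*} [Fintype n] [DecidableEq n] [RCLike 𝕜]
    {A : Matrix n n 𝕜} (hA : A.PosSemidef) : Matrix n n 𝕜 :=
  hA.1.eigenvectorUnitary.1 * diagonal ((↑) ∘ (fun x : ℝ => Real.sqrt x) ∘ hA.1.eigenvalues) *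
    (star hA.1.eigenvectorUnitary : Matrix n n 𝕜)

end

/-!
The p.s.d. square root `R` of `Σ` satisfies `R * R = Σ`, so `colsp S ⊆ colsp Σ ⊆ colsp R`, and the
Penrose identity `R W R = R` shows that `R W` fixes `S`. Both `R W` and `W⁺ W` are symmetric
matrices `X W` with `W X W = W`, hence equal: each is the orthogonal projector onto the row space
of `W`. Since `Q` fixes `W S`, we get `W⁺ Q W S = W⁺ W S = R W S = S`.
-/

namespace Matrix

section Sqrt

open scoped ComplexOrder

variable {n 𝕜 : Type*} [Fintype n] [DecidableEq n] [RCLike 𝕜] {A : Matrix n n 𝕜}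

theorem PosSemidef.sqrt_eq_cfc (hA : A.PosSemidef) : hA.sqrt = cfc Real.sqrt A := by
  rw [hA.1.cfc_eq, IsHermitian.cfc, Unitary.conjStarAlgAut_apply]
  rfl

theorem PosSemidef.sqrt_mul_self (hA : A.PosSemidef) : hA.sqrt * hA.sqrt = A := by
  rw [hA.sqrt_eq_cfc, ← cfc_mul Real.sqrt Real.sqrt A]
  conv_rhs => rw [← cfc_id' ℝ A hA.1]
  refine cfc_congr fun x hx => ?_
  obtain ⟨i, rfl⟩ := hA.1.spectrum_real_eq_range_eigenvalues ▸ hx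
  exact Real.mul_self_sqrt (hA.eigenvalues_nonneg i)

end Sqrt

section Projector

variable {m n α : Type*} [Fintype m] [Fintype n] [CommSemiring α]

theorem IsSymm.eq_of_mul_eq_of_mul_eq {E F : Matrix n n α} (hE : E.IsSymm) (hF : F.IsSymm)
    (hEF : E * F = E) (hFE : F * E = F) : E = F :=
  calc E = (E * F)ᵀ := by rw [hEF, hE.eq]
    _ = F * E := by rw [transpose_mul, hE.eq, hF.eq]
    _ = F := hFE

theorem mul_eq_mul_of_mul_mul_eq_self_of_isSymm {W : Matrix m n α} {X Y : Matrix n m α}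
    (hX : W * X * W = W) (hXW : (X * W).IsSymm) (hY : W * Y * W = W) (hYW : (Y * W).IsSymm) :
    X * W = Y * W :=
  hXW.eq_of_mul_eq_of_mul_eq hYW (by rw [Matrix.mul_assoc X, ← Matrix.mul_assoc W, hY])
    (by rw [Matrix.mul_assoc Y, ← Matrix.mul_assoc W, hX])

end Projector

end Matrix

theorem leace_guards_general {d k : ℕ}
    (Sig : Matrix (Fin d) (Fin d) ℝ) (hSig : Sig.PosSemidef)
    (W Wp : Matrix (Fin d) (Fin d) ℝ)
    -- W is the Moore–Penrose pseudoinverse of the p.s.d. square root of Sig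
    (hW1 : hSig.sqrt * W * hSig.sqrt = hSig.sqrt)
    (hW2 : W * hSig.sqrt * W = W)
    (hW3 : (hSig.sqrt * W)ᵀ = hSig.sqrt * W)
    -- Wp is the Moore–Penrose pseudoinverse of W
    (hWp1 : W * Wp * W = W)
    (hWp4 : (Wp * W)ᵀ = Wp * W)
    (S : Matrix (Fin d) (Fin k) ℝ)
    -- colsp(S) ⊆ colsp(Sig)
    (hS : ∃ C : Matrix (Fin d) (Fin k) ℝ, S = Sig * C)
    (T : Matrix (Fin k) (Fin d) ℝ)
    -- T is the Moore–Penrose pseudoinverse of W * S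
    (hT1 : (W * S) * T * (W * S) = W * S)
    (Q : Matrix (Fin d) (Fin d) ℝ) (hQ : Q = (W * S) * T)
    (P : Matrix (Fin d) (Fin d) ℝ) (hP : P = 1 - Wp * Q * W) :
    P * S = 0 := by
  have hproj : Wp * W = hSig.sqrt * W :=
    mul_eq_mul_of_mul_mul_eq_self_of_isSymm hWp1 hWp4 hW2 hW3
  have hfix : Wp * W * S = S := by
    obtain ⟨C, rfl⟩ := hS
    have hSigC : Sig * C = hSig.sqrt * (hSig.sqrt * C) := by
      rw [← Matrix.mul_assoc, hSig.sqrt_mul_self]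
    rw [hSigC, hproj, ← Matrix.mul_assoc (hSig.sqrt * W), hW1]
  calc P * S = S - Wp * ((W * S) * T * (W * S)) := by
        rw [hP, hQ, Matrix.sub_mul, Matrix.one_mul]
        simp only [Matrix.mul_assoc]
    _ = 0 := by rw [hT1, ← Matrix.mul_assoc, hfix, sub_self]

/-- **Idempotence of the LEACE eraser.**
Let `Sig` be a positive semidefinite `d × d` real matrix with p.s.d. square root
`hSig.sqrt`, and let `W` be the Moore–Penrose pseudoinverse of `hSig.sqrt`
(characterized by the four Penrose conditions) and `Wp` the Moore–Penrose
pseudoinverse of `W`.  Let `S` be any `d × k` matrix whose column space is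
contained in the column space of `Sig` (i.e. `S = Sig * C` for some `C`), and let
`Q = (W * S) * T` where `T` is the Moore–Penrose pseudoinverse of `W * S`, so
that `Q` is the orthogonal projection onto `colsp (W * S)`.  Then the LEACE
matrix `P = I - Wp * Q * W` annihilates `S`: `P * S = 0`: LEACE achieves linear guardedness. -/
theorem leace_guards {d k : ℕ}
    (Sig : Matrix (Fin d) (Fin d) ℝ) (hSig : Sig.PosSemidef)
    (W Wp : Matrix (Fin d) (Fin d) ℝ)
    -- W is the Moore–Penrose pseudoinverse of the p.s.d. square root of Sig
    (hW1 : hSig.sqrt * W * hSig.sqrt = hSig.sqrt)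
    (hW2 : W * hSig.sqrt * W = W)
    (hW3 : (hSig.sqrt * W)ᵀ = hSig.sqrt * W)
    (hW4 : (W * hSig.sqrt)ᵀ = W * hSig.sqrt)
    -- Wp is the Moore–Penrose pseudoinverse of W
    (hWp1 : W * Wp * W = W)
    (hWp2 : Wp * W * Wp = Wp)
    (hWp3 : (W * Wp)ᵀ = W * Wp)
    (hWp4 : (Wp * W)ᵀ = Wp * W)
    (S : Matrix (Fin d) (Fin k) ℝ)
    -- colsp(S) ⊆ colsp(Sig)
    (hS : ∃ C : Matrix (Fin d) (Fin k) ℝ, S = Sig * C)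
    (T : Matrix (Fin k) (Fin d) ℝ)
    -- T is the Moore–Penrose pseudoinverse of W * S
    (hT1 : (W * S) * T * (W * S) = W * S)
    (hT2 : T * (W * S) * T = T)
    (hT3 : ((W * S) * T)ᵀ = (W * S) * T)
    (hT4 : (T * (W * S))ᵀ = T * (W * S))
    (Q : Matrix (Fin d) (Fin d) ℝ) (hQ : Q = (W * S) * T)
    (P : Matrix (Fin d) (Fin d) ℝ) (hP : P = 1 - Wp * Q * W) :
    P * S = 0 :=
  leace_guards_general Sig hSig W Wp hW1 hW2 hW3 hWp1 hWp4 S hS T hT1 Q hQ P hP
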